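/- Word decomposition of the head-insertion encoding: let a = a_1⋯a_n be a nonempty word of distinct positive integers with i = a_1, and let a^{<i}, a^{>i} be the subwords of entries less than, respectively greater than, i (in their original order). Then, modulo I: if both subwords are nonempty, h(a) =_I (2^i ∘_2 h(a^{>i})) ∘_1 h(a^{<i}); if a^{<i} = ∅, h(a) =_I 2^i ∘_2 h(a^{>i}); if a^{>i} = ∅, h(a) =_I 2^i ∘_1 h(a^{<i}); if a = i, h(a) = 2^i. -/

import Mathlib

/-- Indexed terms of the language `L^I`: generators `2^k` and partial compositions. -/
inductive Trm : Type
  | gen : ℕ → Trm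
  | comp : Trm → ℕ → Trm → Trm
deriving DecidableEq

namespace Trm

/-- Arity `|A|`. -/
def arity : Trm → ℕ
  | gen _ => 2
  | comp A _ B => A.arity + B.arity - 1

/-- Set of indices occurring in a term. -/
def ind : Trm → Finset ℕ
  | gen k => {k}
  | comp A _ B => A.ind ∪ B.ind

/-- Root index. -/
def root : Trm → ℕ
  | gen k => k
  | comp A _ _ => A.root

/-- Number of occurrences of the generator. -/
def countGen : Trm → ℕ
  | gen _ => 1
  | comp A _ B => A.countGen + B.countGen

end Trm

/-- The congruence `=_I` generated by (assoc1) and (assoc2). -/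
inductive IEq : Trm → Trm → Prop
  | refl (A : Trm) : IEq A A
  | symm {A B} : IEq A B → IEq B A
  | trans {A B C} : IEq A B → IEq B C → IEq A C
  | congr {A A' B B'} (n : ℕ) : IEq A A' → IEq B B' →
      IEq (Trm.comp A n B) (Trm.comp A' n B')
  | assoc1 (A B C : Trm) (n m : ℕ) : n ≤ m → m < n + B.arity →
      IEq (Trm.comp (Trm.comp A n B) m C) (Trm.comp A n (Trm.comp B (m - n + 1) C))
  | assoc2 (A B C : Trm) (n m : ℕ) : n + B.arity ≤ m →
      IEq (Trm.comp (Trm.comp A n B) m C) (Trm.comp (Trm.comp A (m - B.arity + 1) C) n B)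

/-- Planar binary trees. -/
inductive BT : Type
  | leaf : BT
  | node : BT → BT → BT
deriving DecidableEq

namespace BT

/-- Number of leaves. -/
def leaves : BT → ℕ
  | leaf => 1
  | node l r => l.leaves + r.leaves

/-- Graft `S` at the `i`-th leaf (1-indexed) of a tree. -/
def graft : BT → ℕ → BT → BT
  | leaf, _, S => S
  | node l r, i, S =>
    if i ≤ l.leaves then node (l.graft i S) r else node l (r.graft (i - l.leaves) S)

end BT

/-- Evaluation `ε` of indexed terms to planar binary trees. -/
def Trm.eval : Trm → BT
  | Trm.gen _ => BT.node BT.leaf BT.leaf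
  | Trm.comp A i B => A.eval.graft i B.eval

/-- `l`-factors. -/
inductive LFactor : Trm → Prop
  | gen (k : ℕ) : LFactor (Trm.gen k)
  | step {A : Trm} (j : ℕ) : LFactor A → j ∉ A.ind →
      LFactor (Trm.comp A ((A.ind.filter (· < j)).card + 1) (Trm.gen j))

/-- Auxiliary for the head-insertion encoding: `done` is the list of already
inserted letters. -/
def hAux : Trm → List ℕ → List ℕ → Trm
  | A, _, [] => A
  | A, done, y :: rest =>
      hAux (Trm.comp A ((done.filter (· < y)).length + 1) (Trm.gen y)) (done ++ [y]) rest

/-- Head-insertion encoding `h` (junk value on the empty word). -/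
def hWord : List ℕ → Trm
  | [] => Trm.gen 0
  | x :: rest => hAux (Trm.gen x) [x] rest

/-- `u_a(x)`: number of letters to the left of `x` in `a` that are greater than `x`. -/
def uCount (a : List ℕ) (x : ℕ) : ℕ := ((a.takeWhile (· ≠ x)).filter (x < ·)).length

/-- Decreasing rearrangement of a word. -/
def sortDesc (a : List ℕ) : List ℕ := (a.mergeSort (· ≤ ·)).reverse

/-- Decreasing encoding `f` (junk value on the empty word). -/
def fWord (a : List ℕ) : Trm :=
  match sortDesc a with
  | [] => Trm.gen 0
  | k :: rest => rest.foldl (fun A x => Trm.comp A (uCount a x + 1) (Trm.gen x)) (Trm.gen k)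

/-- Standardization of a word of distinct integers. -/
def std (a : List ℕ) : List ℕ := a.map (fun x => (a.filter (· ≤ x)).length)

/-- Tonks' vertex map, splitting form `φ`. -/
def tonksPhi (a : List ℕ) : BT :=
  match ha : a.getLast? with
  | none => BT.leaf
  | some x =>
      BT.node (tonksPhi (std (a.filter (· < x)))) (tonksPhi (std (a.filter (x < ·))))
termination_by a.length
decreasing_by
  · have hx : x ∈ a := List.mem_of_mem_getLast? (Option.mem_def.mpr ha)
    have : (a.filter (· < x)).length < a.length := by
      apply List.length_filter_lt_length_iff_exists.2
      exact ⟨x, hx, by simp⟩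
    simp only [std, List.length_map, List.length_unattach]
    exact lt_of_lt_of_eq (List.length_filter_lt_length_iff_exists.2
      ⟨⟨x, hx⟩, List.mem_attach _ _, by simp⟩) List.length_attach
  · have hx : x ∈ a := List.mem_of_mem_getLast? (Option.mem_def.mpr ha)
    have : (a.filter (x < ·)).length < a.length := by
      apply List.length_filter_lt_length_iff_exists.2
      exact ⟨x, hx, by simp⟩
    simp only [std, List.length_map, List.length_unattach]
    exact lt_of_lt_of_eq (List.length_filter_lt_length_iff_exists.2
      ⟨⟨x, hx⟩, List.mem_attach _ _, by simp⟩) List.length_attach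

/-- Tonks' vertex map, head-grafting form `φ̂`. -/
def phiHat : List ℕ → BT
  | [] => BT.leaf
  | x :: rest => (phiHat (std rest)).graft x (BT.node BT.leaf BT.leaf)
termination_by a => a.length
decreasing_by
  simp [std]

/-- The Loday–Ronco map `ψ`. -/
def lodayPsi (a : List ℕ) : BT :=
  match hm : a.maximum with
  | none => BT.leaf
  | some m =>
      let i := a.idxOf m
      BT.node (lodayPsi (std (a.take i))) (lodayPsi (std (a.drop (i + 1))))
termination_by a.length
decreasing_by
  · have hmem : m ∈ a := List.maximum_mem hm
    have hi : a.idxOf m < a.length := List.idxOf_lt_length_iff.2 hmem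
    simp only [std, List.length_map, List.length_take]
    omega
  · have : a ≠ [] := by rintro rfl; simp [List.maximum] at hm
    have : 0 < a.length := List.length_pos_iff.2 this
    simp only [std, List.length_map, List.length_drop]
    omega

/-- Inverse of a permutation word on `{1,…,n}`. -/
def invWord (π : List ℕ) : List ℕ :=
  (List.range π.length).map (fun j => π.idxOf (j + 1) + 1)

/-- One Tamari (right rotation) step, at any subtree. -/
inductive TamariStep : BT → BT → Prop
  | rot (X Y Z : BT) : TamariStep (BT.node (BT.node X Y) Z) (BT.node X (BT.node Y Z))
  | left {l l'} (r : BT) : TamariStep l l' → TamariStep (BT.node l r) (BT.node l' r)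
  | right (l : BT) {r r'} : TamariStep r r' → TamariStep (BT.node l r) (BT.node l r')

/-- The Tamari order. -/
def TamariLE : BT → BT → Prop := Relation.ReflTransGen TamariStep

/-- The strict Tamari order. -/
def TamariLT : BT → BT → Prop := Relation.TransGen TamariStep

/-- One cover of the right weak Bruhat order on words. -/
inductive BruhatStep : List ℕ → List ℕ → Prop
  | swap (α : List ℕ) {u v : ℕ} (β : List ℕ) : u < v →
      BruhatStep (α ++ u :: v :: β) (α ++ v :: u :: β)

/-- The right weak Bruhat order on words. -/
def BruhatLE : List ℕ → List ℕ → Prop := Relation.ReflTransGen BruhatStep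

/-- Head-insertion index `k(a; σ)`. -/
def kIdx (a : ℕ) (σ : List ℕ) : ℕ := 1 + (σ.filter (· < a)).length

/-!
Inserting the letters of `a` one at a time, each letter `y ≠ i` lands inside the block
`h(a^{<i})` grafted at leaf 1 of `2^i` when `y < i`, and inside the block `h(a^{>i})`
grafted at leaf 2 when `y > i`. Moving the new generator into its block is one application
of (assoc1), preceded, when `y > i`, by one application of (assoc2) that moves it past the
block at leaf 1. So after each prefix `i p` of `a`, `h(i p)` stays `=_I` to
`(2^i ∘_2 h(p^{>i})) ∘_1 h(p^{<i})`, with an empty block omitted.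
-/

lemma arity_hAux (A : Trm) (done rest : List ℕ) :
    (hAux A done rest).arity = A.arity + rest.length := by
  induction rest generalizing A done with
  | nil => rfl
  | cons y rest ih =>
    simp only [hAux, ih, Trm.arity, List.length_cons]
    omega

lemma arity_hWord_cons (x : ℕ) (p : List ℕ) : (hWord (x :: p)).arity = p.length + 2 := by
  simp [hWord, arity_hAux, Trm.arity, add_comm]

lemma hAux_append_singleton (A : Trm) (done l : List ℕ) (y : ℕ) :
    hAux A done (l ++ [y]) =
      Trm.comp (hAux A done l) (((done ++ l).filter (· < y)).length + 1) (Trm.gen y) := by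
  induction l generalizing A done with
  | nil => simp [hAux]
  | cons z l ih => simp [hAux, ih]

lemma hWord_cons_append_singleton (x : ℕ) (p : List ℕ) (y : ℕ) :
    hWord (x :: (p ++ [y])) =
      Trm.comp (hWord (x :: p)) (((x :: p).filter (· < y)).length + 1) (Trm.gen y) :=
  hAux_append_singleton _ [x] p y

/-- `A ∘_n h(s)`; an empty `s` is omitted rather than read through the junk value `hWord []`. -/
def graftWord (A : Trm) (n : ℕ) : List ℕ → Trm
  | [] => A
  | x :: s => Trm.comp A n (hWord (x :: s))

lemma graftWord_of_ne_nil (A : Trm) (n : ℕ) {s : List ℕ} (hs : s ≠ []) :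
    graftWord A n s = Trm.comp A n (hWord s) := by
  cases s with
  | nil => exact absurd rfl hs
  | cons x s => rfl

lemma IEq.graftWord {A A' : Trm} (n : ℕ) (s : List ℕ) (h : IEq A A') :
    IEq (graftWord A n s) (graftWord A' n s) := by
  cases s with
  | nil => exact h
  | cons x s => exact IEq.congr n h (IEq.refl _)

lemma graftWord_comp_gen (A : Trm) (n : ℕ) (s : List ℕ) (y : ℕ) :
    IEq (Trm.comp (graftWord A n s) (n + (s.filter (· < y)).length) (Trm.gen y))
      (graftWord A n (s ++ [y])) := by
  cases s with
  | nil => exact IEq.refl _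
  | cons x p =>
    have hle := List.length_filter_le (· < y) (x :: p)
    have h := IEq.assoc1 A (hWord (x :: p)) (Trm.gen y) n
      (n + ((x :: p).filter (· < y)).length) (by omega)
      (by rw [arity_hWord_cons]; simp only [List.length_cons] at hle; omega)
    rwa [Nat.add_sub_cancel_left, ← hWord_cons_append_singleton] at h

lemma graftWord_comp_of_lt (A : Trm) {n m : ℕ} (s : List ℕ) (C : Trm) (h : n + s.length < m) :
    IEq (Trm.comp (graftWord A n s) m C) (graftWord (Trm.comp A (m - s.length) C) n s) := by
  cases s with
  | nil => exact IEq.refl _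
  | cons x p =>
    simp only [List.length_cons] at h
    have h' := IEq.assoc2 A (hWord (x :: p)) C n m (by rw [arity_hWord_cons]; omega)
    rwa [arity_hWord_cons, show m - (p.length + 2) + 1 = m - (p.length + 1) by omega] at h'

/-- The term `(2^i ∘_2 h(p^{>i})) ∘_1 h(p^{<i})`, with empty blocks omitted. -/
def splitTerm (i : ℕ) (p : List ℕ) : Trm :=
  graftWord (graftWord (Trm.gen i) 2 (p.filter (i < ·))) 1 (p.filter (· < i))

lemma length_filter_lt_eq_add_of_lt {i y : ℕ} {p : List ℕ} (hiy : i < y) (hp : i ∉ p) :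
    (p.filter (· < y)).length =
      (p.filter (· < i)).length + ((p.filter (i < ·)).filter (· < y)).length := by
  induction p with
  | nil => rfl
  | cons x p ih =>
    simp only [List.mem_cons, not_or] at hp
    have hxi : x ≠ i := Ne.symm hp.1
    simp only [List.filter_cons]
    split_ifs <;> simp_all <;> omega

lemma splitTerm_comp_gen {i y : ℕ} {p : List ℕ} (hy : y ≠ i) (hp : i ∉ p) :
    IEq (Trm.comp (splitTerm i p) (((i :: p).filter (· < y)).length + 1) (Trm.gen y))
      (splitTerm i (p ++ [y])) := by
  unfold splitTerm
  rcases lt_or_gt_of_ne hy with hyi | hiy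
  · have hfilter : (p.filter (· < i)).filter (· < y) = p.filter (· < y) := by
      rw [List.filter_filter]
      exact List.filter_congr fun x _ => by simp only [Bool.and_eq_decide]; grind
    have hidx : ((i :: p).filter (· < y)).length + 1
        = 1 + ((p.filter (· < i)).filter (· < y)).length := by
      simp [hfilter, hyi.not_gt, add_comm]
    simp only [hidx, List.filter_append, List.filter_singleton, hyi, hyi.not_gt,
      decide_true, decide_false, cond_true, cond_false, List.append_nil]
    exact graftWord_comp_gen _ 1 _ y
  · have hidx : ((i :: p).filter (· < y)).length + 1
        = 1 + (p.filter (· < i)).length + 1 + ((p.filter (i < ·)).filter (· < y)).length := by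
      simp [hiy, length_filter_lt_eq_add_of_lt hiy hp]
      omega
    simp only [hidx, List.filter_append, List.filter_singleton, hiy, hiy.not_gt,
      decide_true, decide_false, cond_true, cond_false, List.append_nil]
    refine (graftWord_comp_of_lt _ _ _ (by omega)).trans ?_
    rw [show 1 + (p.filter (· < i)).length + 1 + ((p.filter (i < ·)).filter (· < y)).length
        - (p.filter (· < i)).length = 2 + ((p.filter (i < ·)).filter (· < y)).length by omega]
    exact (graftWord_comp_gen _ 2 _ y).graftWord 1 _

lemma hWord_cons_IEq_splitTerm (i : ℕ) (p : List ℕ) (hp : i ∉ p) :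
    IEq (hWord (i :: p)) (splitTerm i p) := by
  induction p using List.reverseRecOn with
  | nil => exact IEq.refl _
  | append_singleton p y ih =>
    simp only [List.mem_append, List.mem_singleton, not_or] at hp
    rw [hWord_cons_append_singleton]
    exact (IEq.congr _ (ih hp.1) (IEq.refl _)).trans (splitTerm_comp_gen (Ne.symm hp.2) hp.1)

theorem hWord_decomposition_general (a : List ℕ) (ha : a ≠ []) (hnd : a.Nodup)
    (i : ℕ) (hi : i = a.head ha) :
    (a.filter (· < i) ≠ [] → a.filter (i < ·) ≠ [] →
        IEq (hWord a)
          (Trm.comp (Trm.comp (Trm.gen i) 2 (hWord (a.filter (i < ·)))) 1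
            (hWord (a.filter (· < i))))) ∧
    (a.filter (· < i) = [] → a.filter (i < ·) ≠ [] →
        IEq (hWord a) (Trm.comp (Trm.gen i) 2 (hWord (a.filter (i < ·))))) ∧
    (a.filter (i < ·) = [] → a.filter (· < i) ≠ [] →
        IEq (hWord a) (Trm.comp (Trm.gen i) 1 (hWord (a.filter (· < i))))) ∧
    (a = [i] → hWord a = Trm.gen i) := by
  obtain ⟨x, p, rfl⟩ := List.exists_cons_of_ne_nil ha
  obtain rfl : i = x := hi
  have hsplit := hWord_cons_IEq_splitTerm i p (List.nodup_cons.1 hnd).1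
  simp only [List.filter_cons, lt_irrefl, decide_false, Bool.false_eq_true, if_false]
  unfold splitTerm at hsplit
  refine ⟨fun hl hg => ?_, fun hl hg => ?_, fun hg hl => ?_, fun h => ?_⟩
  · rwa [graftWord_of_ne_nil _ _ hg, graftWord_of_ne_nil _ _ hl] at hsplit
  · rwa [hl, graftWord_of_ne_nil _ _ hg] at hsplit
  · rwa [hg, graftWord_of_ne_nil _ _ hl] at hsplit
  · obtain rfl : p = [] := List.cons_eq_cons.1 h |>.2
    rfl

theorem hWord_decomposition (a : List ℕ) (ha : a ≠ []) (hnd : a.Nodup)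
    (hpos : ∀ x ∈ a, 0 < x) (i : ℕ) (hi : i = a.head ha) :
    (a.filter (· < i) ≠ [] → a.filter (i < ·) ≠ [] →
        IEq (hWord a)
          (Trm.comp (Trm.comp (Trm.gen i) 2 (hWord (a.filter (i < ·)))) 1
            (hWord (a.filter (· < i))))) ∧
    (a.filter (· < i) = [] → a.filter (i < ·) ≠ [] →
        IEq (hWord a) (Trm.comp (Trm.gen i) 2 (hWord (a.filter (i < ·))))) ∧
    (a.filter (i < ·) = [] → a.filter (· < i) ≠ [] →
        IEq (hWord a) (Trm.comp (Trm.gen i) 1 (hWord (a.filter (· < i))))) ∧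
    (a = [i] → hWord a = Trm.gen i) :=
  hWord_decomposition_general a ha hnd i hi
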